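/- arXiv:2310.06338 — 4 statements merged into one kernel-verified Lean document; each statement's English description precedes it below -/
import Mathlib

section
/- Freezing propagates within Δ rounds: if some client p has seen two inconsistent ledgers L and L' by round t (L, L' ∈ seen p t and ¬(L ~ L')), then for every client q, every round r ≥ t + Δ, and every ledger M with confirms q M r, the ledger M is a prefix of L and a prefix of L'. -/
/-- Two ledgers are consistent iff one is a prefix of the other. -/
def Consistent {Tx : Type*} (L L' : List Tx) : Prop :=
  L <+: L' ∨ L' <+: L

/-- Freezing propagates within Δ rounds: once some client has seen two
inconsistent ledgers, after Δ more rounds every confirmed ledger is a common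
prefix of both. -/
theorem freezing_propagates {Tx P : Type*} (Δ : ℕ)
    (seen : P → ℕ → Set (List Tx))
    (confirms : P → List Tx → ℕ → Prop)
    (hmono : ∀ (p : P) (r s : ℕ), r ≤ s → seen p r ⊆ seen p s)
    (hgossip : ∀ (p q : P) (r : ℕ) (L : List Tx), L ∈ seen p r → L ∈ seen q (r + Δ))
    (hconf : ∀ (p : P) (L : List Tx) (r : ℕ), confirms p L r →
      Δ ≤ r ∧ L ∈ seen p (r - Δ) ∧ ∀ L' ∈ seen p r, Consistent L L')
    (p : P) (t : ℕ) (L L' : List Tx)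
    (hL : L ∈ seen p t) (hL' : L' ∈ seen p t) (hincons : ¬ Consistent L L') :
    ∀ (q : P) (r : ℕ) (M : List Tx), t + Δ ≤ r → confirms q M r →
      M <+: L ∧ M <+: L' := by
  intro q r M hr hM
  obtain ⟨_, _, hcons⟩ := hconf q M r hM
  have hLq : L ∈ seen q r := hmono q (t+Δ) r hr (hgossip p q t L hL)
  have hL'q : L' ∈ seen q r := hmono q (t+Δ) r hr (hgossip p q t L' hL')
  have h1 := hcons L hLq
  have h2 := hcons L' hL'q
  rcases h1 with h1 | h1 <;> rcases h2 with h2 | h2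
  · exact ⟨h1, h2⟩
  · exact absurd (Or.inr (h2.trans h1)) hincons
  · exact absurd (Or.inl (h1.trans h2)) hincons
  · exact absurd (List.prefix_or_prefix_of_prefix h1 h2) hincons
end

section
/- The recovery genesis extends every client's confirmed ledger: let V be a finite set of validators, B : 𝒱 → List Tx their bookmarks, and H ⊆ V an honest subset with V.card < 2 * H.card. Suppose a ledger L satisfies L is a prefix of B v for every v ∈ H. Suppose L_rec is majority-supported (V.card < 2 * (number of v ∈ V with L_rec a prefix of B v)) and of maximal length among majority-supported ledgers (for every M with V.card < 2 * (number of v ∈ V with M a prefix of B v), M.length ≤ L_rec.length). Then L is a prefix of L_rec. -/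
/-- The recovery genesis extends every client's confirmed ledger. -/
theorem recovery_genesis_extends {Tx 𝒱 : Type*} [DecidableEq Tx]
    (V : Finset 𝒱) (B : 𝒱 → List Tx) (H : Finset 𝒱)
    (hHV : H ⊆ V) (hmaj : V.card < 2 * H.card)
    (L : List Tx) (hL : ∀ v ∈ H, L <+: B v)
    (Lrec : List Tx)
    (hrec : V.card < 2 * (V.filter (fun v => Lrec <+: B v)).card)
    (hmax : ∀ M : List Tx,
      V.card < 2 * (V.filter (fun v => M <+: B v)).card → M.length ≤ Lrec.length) :
    L <+: Lrec := by
  classical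
  have hLmaj : V.card < 2 * (V.filter (fun v => L <+: B v)).card := by
    refine lt_of_lt_of_le hmaj ?_
    have : H ⊆ V.filter (fun v => L <+: B v) := fun v hv =>
      Finset.mem_filter.2 ⟨hHV hv, hL v hv⟩
    exact Nat.mul_le_mul_left 2 (Finset.card_le_card this)
  -- intersection nonempty
  set A := V.filter (fun v => L <+: B v)
  set C := V.filter (fun v => Lrec <+: B v)
  have hinter : (A ∩ C).Nonempty := by
    rw [← Finset.card_pos]
    by_contra h
    push_neg at h
    have h0 : (A ∩ C).card = 0 := Nat.le_zero.mp h
    have hunion : A.card + C.card ≤ V.card := by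
      have := Finset.card_union_add_card_inter A C
      have hsub : A ∪ C ⊆ V := Finset.union_subset (Finset.filter_subset _ _) (Finset.filter_subset _ _)
      have := Finset.card_le_card hsub
      omega
    omega
  obtain ⟨v, hv⟩ := hinter
  have hvA := Finset.mem_inter.1 hv |>.1
  have hvC := Finset.mem_inter.1 hv |>.2
  have h1 : L <+: B v := (Finset.mem_filter.1 hvA).2
  have h2 : Lrec <+: B v := (Finset.mem_filter.1 hvC).2
  have hlen : L.length ≤ Lrec.length := hmax L hLmaj
  rcases List.prefix_or_prefix_of_prefix h1 h2 with h | h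
  · exact h
  · rw [h.eq_of_length_le hlen]
end

section
/- Follow-the-leader: under the recovery-gadget abstraction, if client p confirms ledger L at round r (confirms p L r), then for every validator v, L is a prefix of ack v r. -/
/-- Follow-the-leader: if a client confirms a ledger at round `r`, that ledger
is a prefix of every validator's bookmark at round `r`. -/
theorem follow_the_leader {Tx P 𝒱 : Type*} (Δ : ℕ)
    (seenC : P → ℕ → Set (List Tx)) (seenV : 𝒱 → ℕ → Set (List Tx))
    (confirms : P → List Tx → ℕ → Prop)
    (ack : 𝒱 → ℕ → List Tx)
    (hmonoC : ∀ (p : P) (r s : ℕ), r ≤ s → seenC p r ⊆ seenC p s)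
    (hmonoV : ∀ (v : 𝒱) (r s : ℕ), r ≤ s → seenV v r ⊆ seenV v s)
    (hgossipCC : ∀ (p q : P) (r : ℕ) (L : List Tx), L ∈ seenC p r → L ∈ seenC q (r + Δ))
    (hgossipCV : ∀ (p : P) (v : 𝒱) (r : ℕ) (L : List Tx), L ∈ seenC p r → L ∈ seenV v (r + Δ))
    (hgossipVC : ∀ (v : 𝒱) (p : P) (r : ℕ) (L : List Tx), L ∈ seenV v r → L ∈ seenC p (r + Δ))
    (hgossipVV : ∀ (v w : 𝒱) (r : ℕ) (L : List Tx), L ∈ seenV v r → L ∈ seenV w (r + Δ))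
    (hconf : ∀ (p : P) (L : List Tx) (r : ℕ), confirms p L r →
      3 * Δ ≤ r ∧ L ∈ seenC p (r - 3 * Δ) ∧ ∀ M ∈ seenC p r, Consistent L M)
    (hackSeen : ∀ (v : 𝒱) (r : ℕ), ack v r = [] ∨ ack v r ∈ seenV v r)
    (hackLen : ∀ (v : 𝒱) (r : ℕ) (L : List Tx), Δ ≤ r →
      L ∈ seenV v (r - Δ) → (∀ M ∈ seenV v r, Consistent L M) →
      L.length ≤ (ack v r).length)
    (hackMono : ∀ (v : 𝒱) (r s : ℕ), r ≤ s → ack v r <+: ack v s)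
    (p : P) (L : List Tx) (r : ℕ) (hp : confirms p L r) :
    ∀ v : 𝒱, L <+: ack v r := by
  intro v
  obtain ⟨h3, hLseen, hcons⟩ := hconf p L r hp
  -- L is seen by v at round r - 2Δ
  have hLV : L ∈ seenV v (r - 2 * Δ) := by
    have := hgossipCV p v (r - 3 * Δ) L hLseen
    have heq : r - 3 * Δ + Δ = r - 2 * Δ := by omega
    rwa [heq] at this
  -- every M seen by v at round r - Δ is consistent with L
  have hconsV : ∀ M ∈ seenV v (r - Δ), Consistent L M := by
    intro M hM
    have := hgossipVC v p (r - Δ) M hM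
    have heq : r - Δ + Δ = r := by omega
    rw [heq] at this
    exact hcons M this
  have hlen : L.length ≤ (ack v (r - Δ)).length := by
    apply hackLen v (r - Δ) L (by omega) _ hconsV
    have heq : r - Δ - Δ = r - 2 * Δ := by omega
    rwa [heq]
  have hpref : L <+: ack v (r - Δ) := by
    rcases hackSeen v (r - Δ) with h | h
    · rw [h] at hlen
      simp at hlen
      simp [hlen]
    · have := hgossipVC v p (r - Δ) _ h
      have heq : r - Δ + Δ = r := by omega
      rw [heq] at this
      rcases hcons _ this with hc | hc
      · exact hc
      · exact (hc.eq_of_length_le hlen) ▸ List.prefix_rfl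
  exact hpref.trans (hackMono v (r - Δ) r (by omega))
end

section
/- A majority-supported ledger is consistent with every honest bookmark: let V be a finite set of validators, B : 𝒱 → List Tx their bookmarks, and H ⊆ V an honest subset with V.card < 2 * H.card such that B v ~ B w for all v, w ∈ H. If L_rec is majority-supported (V.card < 2 * (number of v ∈ V with L_rec a prefix of B v)), then L_rec ~ B v for every v ∈ H. -/
/-- A majority-supported ledger is consistent with every honest bookmark. -/
theorem majority_consistent_with_honest {Tx 𝒱 : Type*} [DecidableEq Tx]
    (V : Finset 𝒱) (B : 𝒱 → List Tx) (H : Finset 𝒱)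
    (hHV : H ⊆ V) (hmaj : V.card < 2 * H.card)
    (hhonest : ∀ v ∈ H, ∀ w ∈ H, Consistent (B v) (B w))
    (Lrec : List Tx)
    (hrec : V.card < 2 * (V.filter (fun v => Lrec <+: B v)).card) :
    ∀ v ∈ H, Consistent Lrec (B v) := by
  classical
  set S := V.filter (fun v => Lrec <+: B v) with hS
  have hSV : S ⊆ V := Finset.filter_subset _ _
  have hinter : (H ∩ S).Nonempty := by
    by_contra h
    rw [Finset.not_nonempty_iff_eq_empty, ← Finset.disjoint_iff_inter_eq_empty] at h
    have := Finset.card_union_of_disjoint h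
    have hle : (H ∪ S).card ≤ V.card := Finset.card_le_card (Finset.union_subset hHV hSV)
    omega
  obtain ⟨w, hw⟩ := hinter
  rw [Finset.mem_inter] at hw
  obtain ⟨hwH, hwS⟩ := hw
  have hLw : Lrec <+: B w := (Finset.mem_filter.mp hwS).2
  intro v hv
  rcases hhonest w hwH v hv with hwv | hvw
  · exact Or.inl (hLw.trans hwv)
  · rcases List.prefix_or_prefix_of_prefix hLw hvw with h | h
    · exact Or.inl h
    · exact Or.inr h
end
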